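/- Let f : ℝ^M → ℝ^M be continuously differentiable with Jacobian Df, let T > 0, and let x : [0,T] × ℝ^M → ℝ^M satisfy ∂_t x(t,θ) = f(x(t,θ)) and x(0,θ) = θ for all θ. Fix θ ∈ ℝ^M and suppose that for each t ∈ [0,T] the map θ' ↦ x(t,θ') is differentiable at θ with derivative matrix δ(t) = D_θ x(t,θ) satisfying the variational equation δ'(t) = Df(x(t,θ)) δ(t) with δ(0) = I. Let J : ℝ^M → ℝ be differentiable and set R(θ') = J(x(T,θ')). If λ : [0,T] → ℝ^M is differentiable and satisfies the adjoint equation λ'(t) = −(Df(x(t,θ)))^⊤ λ(t) with final condition λ(T) = ∇J(x(T,θ)), then λ(0) = ∇R(θ). -/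

import Mathlib

/-!
The pairing `⟪λ t, δ t v⟫` is conserved along the flow: differentiating it gives
`⟪-Aᵀ λ, δ v⟫ + ⟪λ, A δ v⟫ = 0` with `A = Df(x(t,θ))`. Hence `δ(0)ᵀ λ(0) = δ(T)ᵀ λ(T)`, which is
`λ(0)` on the left since `δ(0) = I`, and `δ(T)ᵀ ∇J(x(T,θ)) = ∇R(θ)` on the right by the chain rule.
-/

open ContinuousLinearMap Set

variable {E F : Type*} [NormedAddCommGroup E] [InnerProductSpace ℝ E] [CompleteSpace E]
  [NormedAddCommGroup F] [InnerProductSpace ℝ F] [CompleteSpace F]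

theorem HasGradientAt.comp_hasFDerivAt {J : F → ℝ} {j : F} {g : E → F} {D : E →L[ℝ] F} {x : E}
    (hJ : HasGradientAt J j (g x)) (hg : HasFDerivAt g D x) :
    HasGradientAt (J ∘ g) (adjoint D j) x := by
  rw [hasGradientAt_iff_hasFDerivAt] at hJ ⊢
  refine (hJ.comp x hg).congr_fderiv ?_
  ext v
  simp [adjoint_inner_left]

theorem hasDerivAt_inner_apply_eq_zero_of_adjoint_equation {G : Type*} [NormedAddCommGroup G]
    [NormedSpace ℝ G] {lam : ℝ → E} {δ : ℝ → G →L[ℝ] E} {A : E →L[ℝ] E} {t : ℝ}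
    (hlam : HasDerivAt lam (-(adjoint A) (lam t)) t) (hδ : HasDerivAt δ (A.comp (δ t)) t) (v : G) :
    HasDerivAt (fun s ↦ inner ℝ (lam s) (δ s v)) 0 t := by
  have hδv : HasDerivAt (fun s ↦ δ s v) (A (δ t v)) t := by
    simpa using hδ.clm_apply (hasDerivAt_const t v)
  refine (hlam.inner ℝ hδv).congr_deriv ?_
  rw [inner_neg_left, adjoint_inner_left, add_neg_cancel]

theorem adjoint_apply_eq_of_adjoint_equation {lam : ℝ → E} {δ : ℝ → F →L[ℝ] E}
    {A : ℝ → E →L[ℝ] E} {a b : ℝ} (hab : a ≤ b)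
    (hlam : ∀ t ∈ Icc a b, HasDerivAt lam (-(adjoint (A t)) (lam t)) t)
    (hδ : ∀ t ∈ Icc a b, HasDerivAt δ ((A t).comp (δ t)) t) :
    adjoint (δ b) (lam b) = adjoint (δ a) (lam a) := by
  refine ext_inner_right ℝ fun v ↦ ?_
  rw [adjoint_inner_left, adjoint_inner_left]
  have hderiv : ∀ t ∈ Icc a b, HasDerivAt (fun s ↦ inner ℝ (lam s) (δ s v)) 0 t := fun t ht ↦
    hasDerivAt_inner_apply_eq_zero_of_adjoint_equation (hlam t ht) (hδ t ht) v
  exact constant_of_has_deriv_right_zero (fun t ht ↦ (hderiv t ht).continuousAt.continuousWithinAt)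
    (fun t ht ↦ (hderiv t (Ico_subset_Icc_self ht)).hasDerivWithinAt) b ⟨hab, le_rfl⟩

theorem stmt_12_general (M : ℕ) (T : ℝ) (hT : 0 < T)
    (f : EuclideanSpace ℝ (Fin M) → EuclideanSpace ℝ (Fin M))
    (x : ℝ → EuclideanSpace ℝ (Fin M) → EuclideanSpace ℝ (Fin M))
    (J : EuclideanSpace ℝ (Fin M) → ℝ) (hJ : Differentiable ℝ J)
    (θ : EuclideanSpace ℝ (Fin M))
    (δ : ℝ → (EuclideanSpace ℝ (Fin M) →L[ℝ] EuclideanSpace ℝ (Fin M)))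
    (hδ : ∀ t ∈ Set.Icc (0 : ℝ) T, HasFDerivAt (fun θ' => x t θ') (δ t) θ)
    (hδode : ∀ t ∈ Set.Icc (0 : ℝ) T,
      HasDerivAt δ ((fderiv ℝ f (x t θ)).comp (δ t)) t)
    (hδ0 : δ 0 = ContinuousLinearMap.id ℝ (EuclideanSpace ℝ (Fin M)))
    (lam : ℝ → EuclideanSpace ℝ (Fin M))
    (hlamode : ∀ t ∈ Set.Icc (0 : ℝ) T,
      HasDerivAt lam (-(ContinuousLinearMap.adjoint (fderiv ℝ f (x t θ))) (lam t)) t)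
    (hlamT : lam T = gradient J (x T θ)) :
    lam 0 = gradient (fun θ' => J (x T θ')) θ := by
  have hR : HasGradientAt (fun θ' => J (x T θ')) (adjoint (δ T) (gradient J (x T θ))) θ :=
    (hJ (x T θ)).hasGradientAt.comp_hasFDerivAt (hδ T ⟨hT.le, le_rfl⟩)
  calc lam 0 = adjoint (δ 0) (lam 0) := by rw [hδ0, adjoint_id, id_apply]
    _ = adjoint (δ T) (lam T) := (adjoint_apply_eq_of_adjoint_equation hT.le hlamode hδode).symm
    _ = gradient (fun θ' => J (x T θ')) θ := by rw [hlamT, hR.gradient]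

/-- Continuous adjoint method for initial-value sensitivity: for the flow
`∂_t x(t,θ) = f(x(t,θ))`, `x(0,θ) = θ`, with variational derivative `δ(t) = D_θ x(t,θ)`
satisfying `δ' = Df(x) δ`, `δ(0) = id`, and the adjoint `λ' = -(Df(x))ᵀ λ` with
`λ(T) = ∇J(x(T,θ))`, one has `λ(0) = ∇_θ J(x(T,θ))`. -/
theorem stmt_12 (M : ℕ) (T : ℝ) (hT : 0 < T)
    (f : EuclideanSpace ℝ (Fin M) → EuclideanSpace ℝ (Fin M))
    (hf : ContDiff ℝ 1 f)
    (x : ℝ → EuclideanSpace ℝ (Fin M) → EuclideanSpace ℝ (Fin M))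
    (hx0 : ∀ θ', x 0 θ' = θ')
    (hxode : ∀ θ', ∀ t ∈ Set.Icc (0 : ℝ) T, HasDerivAt (fun τ => x τ θ') (f (x t θ')) t)
    (J : EuclideanSpace ℝ (Fin M) → ℝ) (hJ : Differentiable ℝ J)
    (θ : EuclideanSpace ℝ (Fin M))
    (δ : ℝ → (EuclideanSpace ℝ (Fin M) →L[ℝ] EuclideanSpace ℝ (Fin M)))
    (hδ : ∀ t ∈ Set.Icc (0 : ℝ) T, HasFDerivAt (fun θ' => x t θ') (δ t) θ)
    (hδode : ∀ t ∈ Set.Icc (0 : ℝ) T,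
      HasDerivAt δ ((fderiv ℝ f (x t θ)).comp (δ t)) t)
    (hδ0 : δ 0 = ContinuousLinearMap.id ℝ (EuclideanSpace ℝ (Fin M)))
    (lam : ℝ → EuclideanSpace ℝ (Fin M))
    (hlamode : ∀ t ∈ Set.Icc (0 : ℝ) T,
      HasDerivAt lam (-(ContinuousLinearMap.adjoint (fderiv ℝ f (x t θ))) (lam t)) t)
    (hlamT : lam T = gradient J (x T θ)) :
    lam 0 = gradient (fun θ' => J (x T θ')) θ :=
  stmt_12_general M T hT f x J hJ θ δ hδ hδode hδ0 lam hlamode hlamT
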